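/- arXiv:1409.5888 — 3 statements merged into one kernel-verified Lean document; each statement's English description precedes it below -/
import Mathlib

section
/- Let α ∈ (0,1], 0 < a < b, and f : [a,b] → ℝ be (n+1) times α-fractional differentiable such that D_α^{n+1} f is increasing and D_α^n f is decreasing on [a,b]. Let ℓ := (b−a)/(n+2). Then D_α^n f(a+ℓ) − D_α^n f(a) ≤ (n+1)!·(α/(b^α − a^α))^{n+1}·∫_a^b R_{n,f}(a,s) s^{α−1} ds ≤ D_α^n f(b) − D_α^n f(b−ℓ). -/
open Set MeasureTheory intervalIntegral

noncomputable def condD (α : ℝ) (f : ℝ → ℝ) : ℝ → ℝ :=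
  fun t => t ^ (1 - α) * deriv f t

noncomputable def taylorRem (α : ℝ) (f : ℝ → ℝ) (n : ℕ) (t s : ℝ) : ℝ :=
  f s - ∑ k ∈ Finset.range (n+1),
    ((condD α)^[k] f t / (k.factorial : ℝ)) * ((s ^ α - t ^ α) / α) ^ k

/-!
In the variable `z = (s ^ α - a ^ α) / α` the operator `D_α` is `d/dz`, so repeated integration by
parts puts the remainder in Peano-kernel form:
`∫ R s^(α-1) ds = 1/(n+1)! ∫ D_α^(n+1) f(u) ((b^α - u^α)/α)^(n+1) u^(α-1) du`.
Normalised, the kernel is a weight `0 ≤ W ≤ u^(α-1)` of total mass `(b^α - a^α)/(α (n+2))`, so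
Steffensen's inequality for the increasing `D_α^(n+1) f` traps the integral between
`D_α^n f(c₁) - D_α^n f(a)` and `D_α^n f(b) - D_α^n f(c₂)`, where `[a, c₁]` and `[c₂, b]` carry
the same `u^(α-1) du`-mass as `W`. Concavity of `t ↦ t^α` gives `c₁ ≤ a + ℓ` and `c₂ ≤ b - ℓ`,
and `D_α^n f` is decreasing.
-/

open scoped Nat

section Steffensen

variable {G W g h₁ h₂ : ℝ → ℝ} {a b c : ℝ}

theorem MonotoneOn.intervalIntegrable_mul (hG : MonotoneOn G (Icc a b))
    (hW : ContinuousOn W (Icc a b)) {p q : ℝ} (hp : p ∈ Icc a b) (hq : q ∈ Icc a b) :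
    IntervalIntegrable (fun u => G u * W u) volume p q :=
  (hG.mono (uIcc_subset_Icc hp hq)).intervalIntegrable.mul_continuousOn
    (hW.mono (uIcc_subset_Icc hp hq))

theorem ContinuousOn.intervalIntegrable_of_mem_Icc (hW : ContinuousOn W (Icc a b)) {p q : ℝ}
    (hp : p ∈ Icc a b) (hq : q ∈ Icc a b) : IntervalIntegrable W volume p q :=
  (hW.mono (uIcc_subset_Icc hp hq)).intervalIntegrable

-- Subtracting `G c * h` makes both integrands pointwise nonnegative.
theorem integral_mul_add_integral_mul_nonneg_of_monotoneOn (hG : MonotoneOn G (Icc a b))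
    (hc : c ∈ Icc a b) (hh₁ : ContinuousOn h₁ (Icc a b)) (hh₂ : ContinuousOn h₂ (Icc a b))
    (h₁_nonpos : ∀ u ∈ Icc a c, h₁ u ≤ 0) (h₂_nonneg : ∀ u ∈ Icc c b, 0 ≤ h₂ u)
    (hsum : (∫ u in a..c, h₁ u) + ∫ u in c..b, h₂ u = 0) :
    0 ≤ (∫ u in a..c, G u * h₁ u) + ∫ u in c..b, G u * h₂ u := by
  have ha : a ∈ Icc a b := ⟨le_rfl, hc.1.trans hc.2⟩
  have hb : b ∈ Icc a b := ⟨hc.1.trans hc.2, le_rfl⟩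
  calc (0 : ℝ) = G c * ((∫ u in a..c, h₁ u) + ∫ u in c..b, h₂ u) := by rw [hsum, mul_zero]
    _ = (∫ u in a..c, G c * h₁ u) + ∫ u in c..b, G c * h₂ u := by
      rw [intervalIntegral.integral_const_mul, intervalIntegral.integral_const_mul, mul_add]
    _ ≤ (∫ u in a..c, G u * h₁ u) + ∫ u in c..b, G u * h₂ u := by
      refine add_le_add
        (integral_mono_on hc.1 ((hh₁.intervalIntegrable_of_mem_Icc ha hc).const_mul _)
          (hG.intervalIntegrable_mul hh₁ ha hc) fun u hu => ?_)
        (integral_mono_on hc.2 ((hh₂.intervalIntegrable_of_mem_Icc hc hb).const_mul _)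
          (hG.intervalIntegrable_mul hh₂ hc hb) fun u hu => ?_)
      · exact mul_le_mul_of_nonpos_right (hG ⟨hu.1, hu.2.trans hc.2⟩ hc hu.2) (h₁_nonpos u hu)
      · exact mul_le_mul_of_nonneg_right (hG hc ⟨hc.1.trans hu.1, hu.2⟩ hu.1) (h₂_nonneg u hu)

theorem steffensen_lower (hG : MonotoneOn G (Icc a b)) (hW : ContinuousOn W (Icc a b))
    (hg : ContinuousOn g (Icc a b)) (hW_nonneg : ∀ u ∈ Icc a b, 0 ≤ W u)
    (hW_le : ∀ u ∈ Icc a b, W u ≤ g u) (hc : c ∈ Icc a b)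
    (hcW : ∫ u in a..c, g u = ∫ u in a..b, W u) :
    ∫ u in a..c, G u * g u ≤ ∫ u in a..b, G u * W u := by
  have ha : a ∈ Icc a b := ⟨le_rfl, hc.1.trans hc.2⟩
  have hb : b ∈ Icc a b := ⟨hc.1.trans hc.2, le_rfl⟩
  have hWac := hW.intervalIntegrable_of_mem_Icc ha hc
  have hGWac := hG.intervalIntegrable_mul hW ha hc
  have key := integral_mul_add_integral_mul_nonneg_of_monotoneOn (h₁ := fun u => W u - g u)
    hG hc (hW.sub hg) hW (fun u hu => sub_nonpos.2 (hW_le u ⟨hu.1, hu.2.trans hc.2⟩))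
    (fun u hu => hW_nonneg u ⟨hc.1.trans hu.1, hu.2⟩) (by
      rw [integral_sub hWac (hg.intervalIntegrable_of_mem_Icc ha hc), hcW, sub_add_eq_add_sub,
        integral_add_adjacent_intervals hWac (hW.intervalIntegrable_of_mem_Icc hc hb), sub_self])
  simp only [mul_sub] at key
  rw [integral_sub hGWac (hG.intervalIntegrable_mul hg ha hc)] at key
  rw [← integral_add_adjacent_intervals hGWac (hG.intervalIntegrable_mul hW hc hb)]
  linarith

theorem steffensen_upper (hG : MonotoneOn G (Icc a b)) (hW : ContinuousOn W (Icc a b))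
    (hg : ContinuousOn g (Icc a b)) (hW_nonneg : ∀ u ∈ Icc a b, 0 ≤ W u)
    (hW_le : ∀ u ∈ Icc a b, W u ≤ g u) (hc : c ∈ Icc a b)
    (hcW : ∫ u in c..b, g u = ∫ u in a..b, W u) :
    ∫ u in a..b, G u * W u ≤ ∫ u in c..b, G u * g u := by
  have ha : a ∈ Icc a b := ⟨le_rfl, hc.1.trans hc.2⟩
  have hb : b ∈ Icc a b := ⟨hc.1.trans hc.2, le_rfl⟩
  have hWcb := hW.intervalIntegrable_of_mem_Icc hc hb
  have hGWcb := hG.intervalIntegrable_mul hW hc hb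
  have key := integral_mul_add_integral_mul_nonneg_of_monotoneOn (h₁ := fun u => -W u)
    (h₂ := fun u => g u - W u) hG hc hW.neg (hg.sub hW)
    (fun u hu => neg_nonpos.2 (hW_nonneg u ⟨hu.1, hu.2.trans hc.2⟩))
    (fun u hu => sub_nonneg.2 (hW_le u ⟨hc.1.trans hu.1, hu.2⟩)) (by
      rw [intervalIntegral.integral_neg, integral_sub (hg.intervalIntegrable_of_mem_Icc hc hb) hWcb,
        hcW, ← integral_add_adjacent_intervals (hW.intervalIntegrable_of_mem_Icc ha hc) hWcb]
      ring)
  simp only [mul_sub, mul_neg] at key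
  rw [intervalIntegral.integral_neg, integral_sub (hG.intervalIntegrable_mul hg hc hb) hGWcb] at key
  rw [← integral_add_adjacent_intervals (hG.intervalIntegrable_mul hW ha hc) hGWcb]
  linarith

end Steffensen

noncomputable def fracIncr (α t s : ℝ) : ℝ := (s ^ α - t ^ α) / α

section FracIncr

variable {α a b t s : ℝ}

theorem fracIncr_self (α t : ℝ) : fracIncr α t t = 0 := by
  simp [fracIncr]

theorem neg_fracIncr (α t s : ℝ) : -fracIncr α s t = fracIncr α t s := by
  simp only [fracIncr]; ring

theorem hasDerivAt_fracIncr (hα : α ≠ 0) (hs : 0 < s) (t : ℝ) :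
    HasDerivAt (fracIncr α t) (s ^ (α - 1)) s :=
  (((Real.hasDerivAt_rpow_const (Or.inl hs.ne')).sub_const (t ^ α)).div_const α).congr_deriv
    (by field_simp)

theorem hasDerivAt_fracIncr_pow_succ (hα : α ≠ 0) (ht : 0 < t) (s : ℝ) (j : ℕ) :
    HasDerivAt (fun t => fracIncr α t s ^ (j + 1))
      (-((j + 1) * fracIncr α t s ^ j * t ^ (α - 1))) t := by
  have h : HasDerivAt (fracIncr α · s) (-t ^ (α - 1)) t :=
    (((Real.hasDerivAt_rpow_const (Or.inl ht.ne')).const_sub (s ^ α)).div_const α).congr_deriv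
      (by field_simp)
  exact (h.fun_pow (j + 1)).congr_deriv (by push_cast; ring)

theorem integral_rpow_sub_one (hα : 0 < α) (a b : ℝ) :
    ∫ u in a..b, u ^ (α - 1) = fracIncr α a b := by
  rw [integral_rpow (Or.inl (by linarith)), sub_add_cancel, fracIncr]

theorem continuousOn_rpow_const_Icc (ha : 0 < a) (p : ℝ) :
    ContinuousOn (fun u : ℝ => u ^ p) (Icc a b) :=
  continuousOn_id.rpow_const fun _ hu => Or.inl (ha.trans_le hu.1).ne'

theorem continuousOn_fracIncr_left (ha : 0 < a) (α s : ℝ) :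
    ContinuousOn (fracIncr α · s) (Icc a b) :=
  (continuousOn_const.sub (continuousOn_rpow_const_Icc ha α)).div_const α

theorem continuousOn_fracIncr (ha : 0 < a) (α t : ℝ) :
    ContinuousOn (fracIncr α t) (Icc a b) :=
  ((continuousOn_rpow_const_Icc ha α).sub continuousOn_const).div_const α

theorem rpow_inv_add_mul_rpow_le (hα : 0 < α) (hα1 : α ≤ 1) {x y θ : ℝ} (hx : 0 ≤ x)
    (hy : 0 ≤ y) (hθ0 : 0 ≤ θ) (hθ1 : θ ≤ 1) :
    ((1 - θ) * x ^ α + θ * y ^ α) ^ α⁻¹ ≤ (1 - θ) * x + θ * y := by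
  have hθ1' : 0 ≤ 1 - θ := sub_nonneg.2 hθ1
  rw [Real.rpow_inv_le_iff_of_pos (by positivity) (by positivity) hα]
  simpa only [smul_eq_mul] using
    (Real.concaveOn_rpow hα.le hα1).2 hx hy hθ1' hθ0 (sub_add_cancel 1 θ)

theorem exists_fracIncr_eq_mul (hα : 0 < α) (hα1 : α ≤ 1) {x y θ : ℝ} (hx : 0 ≤ x)
    (hy : 0 ≤ y) (hθ0 : 0 ≤ θ) (hθ1 : θ ≤ 1) :
    ∃ c, min x y ≤ c ∧ c ≤ (1 - θ) * x + θ * y ∧ fracIncr α x c = θ * fracIncr α x y := by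
  have hθ1' : 0 ≤ 1 - θ := sub_nonneg.2 hθ1
  have hcomb : 0 ≤ (1 - θ) * x ^ α + θ * y ^ α := by positivity
  refine ⟨_, ?_, rpow_inv_add_mul_rpow_le hα hα1 hx hy hθ0 hθ1, ?_⟩
  · rw [Real.le_rpow_inv_iff_of_pos (le_min hx hy) hcomb hα]
    have hx' := Real.rpow_le_rpow (le_min hx hy) (min_le_left x y) hα.le
    have hy' := Real.rpow_le_rpow (le_min hx hy) (min_le_right x y) hα.le
    nlinarith
  · rw [fracIncr, fracIncr, Real.rpow_inv_rpow hcomb hα.ne']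
    ring

end FracIncr

section TaylorRemainder

variable {α a b : ℝ}

theorem DifferentiableAt.hasDerivAt_condD {g : ℝ → ℝ} {x : ℝ} (hg : DifferentiableAt ℝ g x)
    (hx : 0 < x) : HasDerivAt g (condD α g x * x ^ (α - 1)) x :=
  hg.hasDerivAt.congr_deriv <| by
    rw [condD, mul_right_comm, ← Real.rpow_add hx]; norm_num

theorem taylorRem_zero (α : ℝ) (g : ℝ → ℝ) (t s : ℝ) : taylorRem α g 0 t s = g s - g t := by
  simp [taylorRem]

theorem taylorRem_self (α : ℝ) (g : ℝ → ℝ) (m : ℕ) (t : ℝ) : taylorRem α g m t t = 0 := by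
  simp [taylorRem, Finset.sum_range_succ']

theorem hasDerivAt_taylorRem_succ (hα : α ≠ 0) {g : ℝ → ℝ} {s : ℝ} (hs : 0 < s)
    (hg : DifferentiableAt ℝ g s) (m : ℕ) :
    HasDerivAt (taylorRem α g (m + 1) a) (taylorRem α (condD α g) m a s * s ^ (α - 1)) s := by
  have hsum : HasDerivAt
      (fun s => ∑ k ∈ Finset.range (m + 2), (condD α)^[k] g a / k ! * fracIncr α a s ^ k)
      (∑ k ∈ Finset.range (m + 2),
        (condD α)^[k] g a / k ! * (k * fracIncr α a s ^ (k - 1) * s ^ (α - 1))) s :=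
    HasDerivAt.fun_sum fun k _ => ((hasDerivAt_fracIncr hα hs a).fun_pow k).const_mul _
  refine ((hg.hasDerivAt_condD (α := α) hs).sub hsum).congr_deriv ?_
  rw [taylorRem, sub_mul, Finset.sum_mul, Finset.sum_range_succ' _ (m + 1)]
  simp only [CharP.cast_eq_zero, zero_mul, mul_zero, add_zero, Nat.cast_add, Nat.cast_one,
    Nat.add_sub_cancel, Function.iterate_succ_apply, Nat.factorial_succ, Nat.cast_mul]
  congr 1
  refine Finset.sum_congr rfl fun k _ => ?_
  simp only [fracIncr]
  field_simp

theorem continuousOn_taylorRem (ha : 0 < a) {g : ℝ → ℝ} (hg : ContinuousOn g (Icc a b))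
    (m : ℕ) : ContinuousOn (taylorRem α g m a) (Icc a b) :=
  hg.sub <| continuousOn_finsetSum _ fun k _ =>
    continuousOn_const.mul ((continuousOn_fracIncr ha α a).pow k)

end TaylorRemainder

section RemainderIdentity

variable {α a b : ℝ}

theorem integral_mul_fracIncr_pow_eq (hα : 0 < α) (ha : 0 < a) (hab : a ≤ b) {R R' : ℝ → ℝ}
    (hR : ∀ s ∈ Icc a b, HasDerivAt R (R' s * s ^ (α - 1)) s) (hRa : R a = 0)
    (hR' : IntervalIntegrable (fun s => R' s * s ^ (α - 1)) volume a b) (j : ℕ) :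
    ∫ s in a..b, R s * fracIncr α s b ^ j * s ^ (α - 1) =
      (∫ s in a..b, R' s * fracIncr α s b ^ (j + 1) * s ^ (α - 1)) / (j + 1) := by
  have hv : ∀ s ∈ uIcc a b, HasDerivAt (fun t => -(fracIncr α t b ^ (j + 1) / (j + 1)))
      (fracIncr α s b ^ j * s ^ (α - 1)) s := fun s hs =>
    ((hasDerivAt_fracIncr_pow_succ hα.ne' (ha.trans_le (uIcc_of_le hab ▸ hs).1) b j).div_const
      _).neg.congr_deriv (by field_simp)
  have hv' : IntervalIntegrable (fun s => fracIncr α s b ^ j * s ^ (α - 1)) volume a b :=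
    (((continuousOn_fracIncr_left ha α b).pow j).mul
      (continuousOn_rpow_const_Icc ha _)).intervalIntegrable_of_Icc hab
  have h := integral_mul_deriv_eq_deriv_mul (fun s hs => hR s (uIcc_of_le hab ▸ hs)) hv hR' hv'
  simp only [hRa, fracIncr_self, zero_pow (Nat.succ_ne_zero j), zero_div, neg_zero, mul_zero,
    zero_mul, sub_zero, zero_sub] at h
  simp only [mul_assoc, h, mul_neg, intervalIntegral.integral_neg, neg_neg,
    ← intervalIntegral.integral_div]
  refine integral_congr fun s _ => ?_
  ring

theorem integral_taylorRem_mul_fracIncr_pow (hα : 0 < α) (ha : 0 < a) (hab : a ≤ b) (m : ℕ)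
    (g : ℝ → ℝ) (j : ℕ) (hg : ∀ k ≤ m, ∀ x ∈ Icc a b, DifferentiableAt ℝ ((condD α)^[k] g) x)
    (hg' : IntervalIntegrable ((condD α)^[m + 1] g) volume a b) :
    ∫ s in a..b, taylorRem α g m a s * fracIncr α s b ^ j * s ^ (α - 1) =
      j ! / (j + m + 1)! *
        ∫ s in a..b, (condD α)^[m + 1] g s * fracIncr α s b ^ (j + m + 1) * s ^ (α - 1) := by
  have hg₀ : ∀ x ∈ Icc a b, DifferentiableAt ℝ g x := hg 0 (Nat.zero_le m)
  induction m generalizing g j with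
  | zero =>
    have hR : ∀ s ∈ Icc a b, HasDerivAt (taylorRem α g 0 a) (condD α g s * s ^ (α - 1)) s :=
      fun s hs => by
        simpa only [funext (taylorRem_zero α g a)] using
          ((hg₀ s hs).hasDerivAt_condD (ha.trans_le hs.1)).sub_const (g a)
    rw [integral_mul_fracIncr_pow_eq hα ha hab hR (taylorRem_self α g 0 a)
      (hg'.mul_continuousOn (uIcc_of_le hab ▸ continuousOn_rpow_const_Icc ha _)) j]
    simp only [zero_add, Function.iterate_one, add_zero, Nat.factorial_succ, Nat.cast_mul,
      Nat.cast_add, Nat.cast_one]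
    field_simp
  | succ m ih =>
    have hcont : ContinuousOn (condD α g) (Icc a b) := fun x hx =>
      (hg 1 (by omega) x hx).continuousAt.continuousWithinAt
    rw [integral_mul_fracIncr_pow_eq hα ha hab
      (fun s hs => hasDerivAt_taylorRem_succ hα.ne' (ha.trans_le hs.1) (hg₀ s hs) m)
      (taylorRem_self α g (m + 1) a)
      (((continuousOn_taylorRem ha hcont m).mul
        (continuousOn_rpow_const_Icc ha _)).intervalIntegrable_of_Icc hab) j,
      ih (condD α g) (j + 1) (fun k hk => hg (k + 1) (by omega)) hg'
        (by simpa using hg 1 (by omega)),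
      ← Function.iterate_succ_apply, show j + 1 + m + 1 = j + (m + 1) + 1 by omega]
    simp only [Nat.factorial_succ, Nat.cast_mul, Nat.cast_add, Nat.cast_one]
    field_simp

end RemainderIdentity

section Weight

variable {α a b u : ℝ}

theorem fracIncr_nonneg (hα : 0 < α) {t s : ℝ} (ht : 0 ≤ t) (hts : t ≤ s) :
    0 ≤ fracIncr α t s :=
  div_nonneg (sub_nonneg.2 (Real.rpow_le_rpow ht hts hα.le)) hα.le

theorem fracIncr_le_fracIncr_left (hα : 0 < α) (ha : 0 ≤ a) (hau : a ≤ u) (s : ℝ) :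
    fracIncr α u s ≤ fracIncr α a s :=
  div_le_div_of_nonneg_right (sub_le_sub_left (Real.rpow_le_rpow ha hau hα.le) _) hα.le

/-- The Peano kernel of the remainder, normalised to equal `u ^ (α - 1)` at `u = a`. -/
noncomputable def taylorWeight (α a b : ℝ) (p : ℕ) (u : ℝ) : ℝ :=
  (fracIncr α u b / fracIncr α a b) ^ p * u ^ (α - 1)

theorem taylorWeight_nonneg (hα : 0 < α) (ha : 0 < a) (hu : u ∈ Icc a b) (p : ℕ) :
    0 ≤ taylorWeight α a b p u :=
  mul_nonneg (pow_nonneg (div_nonneg (fracIncr_nonneg hα (ha.le.trans hu.1) hu.2)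
    (fracIncr_nonneg hα ha.le (hu.1.trans hu.2))) p) (Real.rpow_nonneg (ha.le.trans hu.1) _)

theorem taylorWeight_le_rpow (hα : 0 < α) (ha : 0 < a) (hu : u ∈ Icc a b) (p : ℕ) :
    taylorWeight α a b p u ≤ u ^ (α - 1) :=
  mul_le_of_le_one_left (Real.rpow_nonneg (ha.le.trans hu.1) _) <| pow_le_one₀
    (div_nonneg (fracIncr_nonneg hα (ha.le.trans hu.1) hu.2)
      (fracIncr_nonneg hα ha.le (hu.1.trans hu.2)))
    (div_le_one_of_le₀ (fracIncr_le_fracIncr_left hα ha.le hu.1 b)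
      (fracIncr_nonneg hα ha.le (hu.1.trans hu.2)))

theorem continuousOn_taylorWeight (ha : 0 < a) (α b : ℝ) (p : ℕ) :
    ContinuousOn (taylorWeight α a b p) (Icc a b) :=
  (((continuousOn_fracIncr_left ha α b).div_const _).pow p).mul (continuousOn_rpow_const_Icc ha _)

theorem integral_taylorWeight (hα : 0 < α) (ha : 0 < a) (hab : a < b) (p : ℕ) :
    ∫ u in a..b, taylorWeight α a b p u = fracIncr α a b / (p + 1) := by
  have hpos : 0 < fracIncr α a b :=
    div_pos (sub_pos.2 (Real.rpow_lt_rpow ha.le hab hα)) hα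
  have hderiv : ∀ u ∈ uIcc a b, HasDerivAt
      (fun t => -(fracIncr α t b ^ (p + 1) / ((p + 1) * fracIncr α a b ^ p)))
      (taylorWeight α a b p u) u := fun u hu =>
    ((hasDerivAt_fracIncr_pow_succ hα.ne' (ha.trans_le (uIcc_of_le hab.le ▸ hu).1) b p).div_const
      _).neg.congr_deriv (by rw [taylorWeight, div_pow]; field_simp)
  rw [integral_eq_sub_of_hasDerivAt hderiv
    ((continuousOn_taylorWeight ha α b p).intervalIntegrable_of_Icc hab.le), fracIncr_self,
    zero_pow (Nat.succ_ne_zero p)]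
  field_simp
  ring

end Weight

theorem steffensen_bounds_of_hasDerivAt {α a b θ : ℝ} (hα : 0 < α) (hα1 : α ≤ 1) (ha : 0 < a)
    (hab : a ≤ b) {F G W : ℝ → ℝ} (hF : ∀ x ∈ Icc a b, HasDerivAt F (G x * x ^ (α - 1)) x)
    (hG : MonotoneOn G (Icc a b)) (hF_anti : AntitoneOn F (Icc a b))
    (hW : ContinuousOn W (Icc a b)) (hW_nonneg : ∀ u ∈ Icc a b, 0 ≤ W u)
    (hW_le : ∀ u ∈ Icc a b, W u ≤ u ^ (α - 1)) (hθ0 : 0 ≤ θ) (hθ1 : θ ≤ 1)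
    (hWθ : ∫ u in a..b, W u = θ * fracIncr α a b) :
    F ((1 - θ) * a + θ * b) - F a ≤ ∫ u in a..b, G u * W u ∧
      ∫ u in a..b, G u * W u ≤ F b - F ((1 - θ) * b + θ * a) := by
  have hg := continuousOn_rpow_const_Icc (b := b) ha (α - 1)
  have hFTC : ∀ c ∈ Icc a b, ∀ d ∈ Icc a b, ∫ u in c..d, G u * u ^ (α - 1) = F d - F c :=
    fun c hc d hd => integral_eq_sub_of_hasDerivAt (fun x hx => hF x (uIcc_subset_Icc hc hd hx))
      (hG.intervalIntegrable_mul hg hc hd)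
  have hθb : 0 ≤ θ * (b - a) := mul_nonneg hθ0 (sub_nonneg.2 hab)
  have hθb' : 0 ≤ (1 - θ) * (b - a) := mul_nonneg (sub_nonneg.2 hθ1) (sub_nonneg.2 hab)
  have hcomb₁ : (1 - θ) * a + θ * b ∈ Icc a b := ⟨by linarith, by linarith⟩
  have hcomb₂ : (1 - θ) * b + θ * a ∈ Icc a b := ⟨by linarith, by linarith⟩
  obtain ⟨c₁, hac₁, hc₁, hc₁W⟩ := exists_fracIncr_eq_mul hα hα1 ha.le (ha.le.trans hab) hθ0 hθ1
  obtain ⟨c₂, hac₂, hc₂, hc₂W⟩ := exists_fracIncr_eq_mul hα hα1 (ha.le.trans hab) ha.le hθ0 hθ1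
  have hc₁ab : c₁ ∈ Icc a b := ⟨min_eq_left hab ▸ hac₁, hc₁.trans hcomb₁.2⟩
  have hc₂ab : c₂ ∈ Icc a b := ⟨min_eq_right hab ▸ hac₂, hc₂.trans hcomb₂.2⟩
  constructor
  · calc F ((1 - θ) * a + θ * b) - F a ≤ F c₁ - F a := by linarith [hF_anti hc₁ab hcomb₁ hc₁]
      _ = ∫ u in a..c₁, G u * u ^ (α - 1) := (hFTC a ⟨le_rfl, hab⟩ c₁ hc₁ab).symm
      _ ≤ ∫ u in a..b, G u * W u := steffensen_lower hG hW hg hW_nonneg hW_le hc₁ab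
        (by rw [integral_rpow_sub_one hα, hc₁W, hWθ])
  · calc ∫ u in a..b, G u * W u ≤ ∫ u in c₂..b, G u * u ^ (α - 1) :=
          steffensen_upper hG hW hg hW_nonneg hW_le hc₂ab (by
            rw [integral_rpow_sub_one hα, ← neg_fracIncr, hc₂W, hWθ, ← neg_fracIncr α a b]
            ring)
      _ = F b - F c₂ := hFTC c₂ hc₂ab b ⟨hab, le_rfl⟩
      _ ≤ F b - F ((1 - θ) * b + θ * a) := by linarith [hF_anti hc₂ab hcomb₂ hc₂]

theorem factorial_mul_integral_taylorRem {α a b : ℝ} (hα : 0 < α) (ha : 0 < a) (hab : a < b)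
    (n : ℕ) (f : ℝ → ℝ) (hdiff : ∀ k ≤ n, ∀ x ∈ Icc a b, DifferentiableAt ℝ ((condD α)^[k] f) x)
    (hf : IntervalIntegrable ((condD α)^[n + 1] f) volume a b) :
    ((n + 1)! : ℝ) * (α / (b ^ α - a ^ α)) ^ (n + 1) *
        ∫ s in a..b, taylorRem α f n a s * s ^ (α - 1) =
      ∫ u in a..b, (condD α)^[n + 1] f u * taylorWeight α a b (n + 1) u := by
  have hba : b ^ α - a ^ α ≠ 0 := (sub_pos.2 (Real.rpow_lt_rpow ha.le hab hα)).ne'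
  have h := integral_taylorRem_mul_fracIncr_pow hα ha hab.le n f 0 hdiff hf
  simp only [pow_zero, mul_one, zero_add, Nat.factorial_zero, Nat.cast_one] at h
  have hW : ∀ u, (condD α)^[n + 1] f u * taylorWeight α a b (n + 1) u =
      (α / (b ^ α - a ^ α)) ^ (n + 1) *
        ((condD α)^[n + 1] f u * fracIncr α u b ^ (n + 1) * u ^ (α - 1)) := fun u => by
    rw [taylorWeight, fracIncr, fracIncr, div_div_div_cancel_right₀ hα.ne', div_pow, div_pow,
      div_pow]
    field_simp
  rw [h, integral_congr fun u _ => hW u, intervalIntegral.integral_const_mul]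
  field_simp

theorem remainder_steffensen_bounds_general (α a b : ℝ) (hα : 0 < α ∧ α ≤ 1)
    (ha : 0 < a) (hab : a < b) (n : ℕ) (f : ℝ → ℝ)
    (hdiff : ∀ k ≤ n, ∀ x ∈ Icc a b, DifferentiableAt ℝ ((condD α)^[k] f) x)
    (hinc : MonotoneOn ((condD α)^[n+1] f) (Icc a b))
    (hdec : AntitoneOn ((condD α)^[n] f) (Icc a b))
    (ℓ : ℝ) (hℓ : ℓ = (b - a) / (n + 2)) :
    (condD α)^[n] f (a + ℓ) - (condD α)^[n] f a ≤
      ((n+1).factorial : ℝ) * (α / (b ^ α - a ^ α)) ^ (n+1) *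
        (∫ s in a..b, taylorRem α f n a s * s ^ (α - 1)) ∧
    ((n+1).factorial : ℝ) * (α / (b ^ α - a ^ α)) ^ (n+1) *
        (∫ s in a..b, taylorRem α f n a s * s ^ (α - 1)) ≤
      (condD α)^[n] f b - (condD α)^[n] f (b - ℓ) := by
  obtain ⟨hα0, hα1⟩ := hα
  have hF : ∀ x ∈ Icc a b,
      HasDerivAt ((condD α)^[n] f) ((condD α)^[n + 1] f x * x ^ (α - 1)) x := fun x hx => by
    simpa only [Function.iterate_succ_apply'] using
      (hdiff n le_rfl x hx).hasDerivAt_condD (ha.trans_le hx.1)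
  have hn : (0 : ℝ) < n + 2 := by positivity
  obtain ⟨hlower, hupper⟩ := steffensen_bounds_of_hasDerivAt hα0 hα1 ha hab.le hF hinc hdec
    (continuousOn_taylorWeight ha α b (n + 1)) (fun u hu => taylorWeight_nonneg hα0 ha hu _)
    (fun u hu => taylorWeight_le_rpow hα0 ha hu _) (θ := 1 / (n + 2)) (by positivity)
    ((div_le_one hn).2 (by linarith)) (by rw [integral_taylorWeight hα0 ha hab]; push_cast; ring)
  rw [factorial_mul_integral_taylorRem hα0 ha hab n f hdiff
    (hinc.mono (uIcc_of_le hab.le).subset).intervalIntegrable]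
  refine ⟨?_, ?_⟩
  · convert hlower using 3
    rw [hℓ]; field_simp; ring
  · convert hupper using 3
    rw [hℓ]; field_simp; ring

/-- Steffensen-type bounds for the α-fractional Taylor remainder. -/
theorem remainder_steffensen_bounds (α a b : ℝ) (hα : 0 < α ∧ α ≤ 1)
    (ha : 0 < a) (hab : a < b) (n : ℕ) (f : ℝ → ℝ)
    (hdiff : ∀ k ≤ n, ∀ x ∈ Icc a b, DifferentiableAt ℝ ((condD α)^[k] f) x)
    (hinc : MonotoneOn ((condD α)^[n+1] f) (Icc a b))
    (hdec : AntitoneOn ((condD α)^[n] f) (Icc a b))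
    (hint : IntervalIntegrable (fun s => taylorRem α f n a s * s ^ (α - 1)) volume a b)
    (ℓ : ℝ) (hℓ : ℓ = (b - a) / (n + 2)) :
    (condD α)^[n] f (a + ℓ) - (condD α)^[n] f a ≤
      ((n+1).factorial : ℝ) * (α / (b ^ α - a ^ α)) ^ (n+1) *
        (∫ s in a..b, taylorRem α f n a s * s ^ (α - 1)) ∧
    ((n+1).factorial : ℝ) * (α / (b ^ α - a ^ α)) ^ (n+1) *
        (∫ s in a..b, taylorRem α f n a s * s ^ (α - 1)) ≤
      (condD α)^[n] f b - (condD α)^[n] f (b - ℓ) :=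
  remainder_steffensen_bounds_general α a b hα ha hab n f hdiff hinc hdec ℓ hℓ
end

section
/- Montgomery identity: Let α ∈ (0,1], 0 ≤ a < b, and f : [a,b] → ℝ be α-fractional differentiable with D_α f continuous. Then for all t ∈ [a,b]: f(t) = (α/(b^α − a^α))·∫_a^b f(s) s^{α−1} ds + (α/(b^α − a^α))·∫_a^b p(t,s)·D_α f(s)·s^{α−1} ds, where p(t,s) := (s^α − a^α)/α for a ≤ s < t and p(t,s) := (s^α − b^α)/α for t ≤ s ≤ b. -/
/-!
For `P_c(s) = (s^α - c^α)/α` we have `P_c' = s^(α-1)`, so on `(0, ∞)`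
`(P_c f)' = f(s) s^(α-1) + P_c(s) · D_α f(s) · s^(α-1)`. Integrating this over `[a, t]` with
`c = a` and over `[t, b]` with `c = b`, the boundary terms at `a` and `b` vanish and those at `t`
add up to `(b^α - a^α)/α · f(t)`.
-/

open Set MeasureTheory intervalIntegral

open scoped Interval

theorem intervalIntegral.integral_ite_lt {E : Type*} [NormedAddCommGroup E] [NormedSpace ℝ E]
    {f g : ℝ → E} {a t b : ℝ} (hat : a ≤ t) (htb : t ≤ b)
    (hf : IntervalIntegrable f volume a t) (hg : IntervalIntegrable g volume t b) :
    ∫ s in a..b, (if s < t then f s else g s) = (∫ s in a..t, f s) + ∫ s in t..b, g s := by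
  have hleft : ∀ᵐ s : ℝ, s ∈ Ι a t → (if s < t then f s else g s) = f s := by
    filter_upwards [measure_eq_zero_iff_ae_notMem.1 (measure_singleton t)] with s hst hs
    rw [uIoc_of_le hat] at hs
    exact if_pos (lt_of_le_of_ne hs.2 hst)
  have hright : EqOn (fun s => if s < t then f s else g s) g [[t, b]] := fun s hs =>
    if_neg (not_lt.2 (uIcc_of_le htb ▸ hs).1)
  have hleft' : f =ᵐ[volume.restrict (Ι a t)] fun s => if s < t then f s else g s :=
    (ae_restrict_iff' measurableSet_uIoc).2 (hleft.mono fun s h hs => (h hs).symm)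
  rw [← integral_add_adjacent_intervals (hf.congr_ae hleft')
      (hg.congr (hright.symm.mono uIoc_subset_uIcc)),
    integral_congr_ae hleft, integral_congr hright]

theorem intervalIntegrable_mul_rpow_sub_one {g : ℝ → ℝ} {α u v : ℝ} (hα : 0 < α)
    (hg : ContinuousOn g [[u, v]]) :
    IntervalIntegrable (fun s => g s * s ^ (α - 1)) volume u v :=
  (intervalIntegrable_rpow' (by linarith)).continuousOn_mul hg

theorem intervalIntegrable_rpow_sub_rpow_div_mul_condD {α u v : ℝ} (hα : 0 < α) {f : ℝ → ℝ}
    (hD : ContinuousOn (condD α f) [[u, v]]) (c : ℝ) :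
    IntervalIntegrable (fun s => (s ^ α - c ^ α) / α * condD α f s * s ^ (α - 1)) volume u v :=
  intervalIntegrable_mul_rpow_sub_one hα <|
    (((continuousOn_id.rpow_const fun _ _ => Or.inr hα.le).sub continuousOn_const).div_const α).mul hD

theorem hasDerivAt_rpow_sub_rpow_div {α x : ℝ} (hα : α ≠ 0) (hx : x ≠ 0) (c : ℝ) :
    HasDerivAt (fun s => (s ^ α - c ^ α) / α) (x ^ (α - 1)) x := by
  simpa only [mul_div_cancel_left₀ _ hα] using
    ((Real.hasDerivAt_rpow_const (p := α) (Or.inl hx)).sub_const (c ^ α)).div_const α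

theorem condD_mul_rpow_sub_one {x : ℝ} (hx : 0 < x) (α : ℝ) (f : ℝ → ℝ) :
    condD α f x * x ^ (α - 1) = deriv f x := by
  rw [condD, mul_right_comm, ← Real.rpow_add hx, sub_add_sub_cancel', sub_self, Real.rpow_zero,
    one_mul]

theorem integral_rpow_sub_rpow_div_mul_condD {α u v : ℝ} (hα : 0 < α) (hu : 0 ≤ u) (huv : u ≤ v)
    {f : ℝ → ℝ} (hdiff : ∀ x ∈ Icc u v, DifferentiableAt ℝ f x)
    (hD : ContinuousOn (condD α f) (Icc u v)) (c : ℝ) :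
    ∫ s in u..v, (s ^ α - c ^ α) / α * condD α f s * s ^ (α - 1)
      = (v ^ α - c ^ α) / α * f v - (u ^ α - c ^ α) / α * f u
        - ∫ s in u..v, f s * s ^ (α - 1) := by
  have hf : ContinuousOn f (Icc u v) := fun x hx => (hdiff x hx).continuousAt.continuousWithinAt
  have hprim : ContinuousOn (fun s : ℝ => (s ^ α - c ^ α) / α) (Icc u v) :=
    ((continuousOn_id.rpow_const fun _ _ => Or.inr hα.le).sub continuousOn_const).div_const α
  have hint₁ := intervalIntegrable_mul_rpow_sub_one hα (uIcc_of_le huv ▸ hf)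
  have hint₂ := intervalIntegrable_rpow_sub_rpow_div_mul_condD hα (uIcc_of_le huv ▸ hD) c
  rw [eq_sub_iff_add_eq, ← integral_add hint₂ hint₁]
  refine integral_eq_sub_of_hasDerivAt_of_le huv (hprim.mul hf) (fun x hx => ?_) (hint₂.add hint₁)
  have hx0 : 0 < x := hu.trans_lt hx.1
  refine ((hasDerivAt_rpow_sub_rpow_div hα.ne' hx0.ne' c).mul
    (hdiff x (Ioo_subset_Icc_self hx)).hasDerivAt).congr_deriv ?_
  rw [mul_assoc, condD_mul_rpow_sub_one hx0]
  ring

/-- Montgomery identity for conformable fractional derivatives. -/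
theorem montgomery_identity (α a b : ℝ) (hα : 0 < α ∧ α ≤ 1)
    (ha : 0 ≤ a) (hab : a < b) (f : ℝ → ℝ)
    (hdiff : ∀ x ∈ Icc a b, DifferentiableAt ℝ f x)
    (hcont : ContinuousOn (condD α f) (Icc a b))
    (t : ℝ) (ht : t ∈ Icc a b) :
    f t = (α / (b ^ α - a ^ α)) * (∫ s in a..b, f s * s ^ (α - 1))
        + (α / (b ^ α - a ^ α)) *
          ∫ s in a..b,
            (if s < t then (s ^ α - a ^ α) / α else (s ^ α - b ^ α) / α) *
              condD α f s * s ^ (α - 1) := by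
  obtain ⟨hα, -⟩ := hα
  obtain ⟨hat, htb⟩ := ht
  have hsub₁ : Icc a t ⊆ Icc a b := Icc_subset_Icc_right htb
  have hsub₂ : Icc t b ⊆ Icc a b := Icc_subset_Icc_left hat
  have hf : ContinuousOn f (Icc a b) := fun x hx => (hdiff x hx).continuousAt.continuousWithinAt
  have hsplit := integral_add_adjacent_intervals
    (intervalIntegrable_mul_rpow_sub_one hα (uIcc_of_le hat ▸ hf.mono hsub₁))
    (intervalIntegrable_mul_rpow_sub_one hα (uIcc_of_le htb ▸ hf.mono hsub₂))
  have hpos : 0 < b ^ α - a ^ α := sub_pos.2 (Real.rpow_lt_rpow ha hab hα)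
  simp only [ite_mul]
  rw [integral_ite_lt hat htb
      (intervalIntegrable_rpow_sub_rpow_div_mul_condD hα (uIcc_of_le hat ▸ hcont.mono hsub₁) a)
      (intervalIntegrable_rpow_sub_rpow_div_mul_condD hα (uIcc_of_le htb ▸ hcont.mono hsub₂) b),
    integral_rpow_sub_rpow_div_mul_condD hα ha hat (fun x hx => hdiff x (hsub₁ hx))
      (hcont.mono hsub₁),
    integral_rpow_sub_rpow_div_mul_condD hα (ha.trans hat) htb (fun x hx => hdiff x (hsub₂ hx))
      (hcont.mono hsub₂), ← hsplit]
  field_simp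
  ring
end

section
/- Hermite–Hadamard inequality III: Let α ∈ (0,1], 0 ≤ a < b, f : [a,b] → ℝ be α-fractional differentiable with D_α f continuous and m ≤ D_α f(t) ≤ M on [a,b]. Then |(f(a) + f(b))/2 − (α/(b^α − a^α))·∫_a^b f(s) s^{α−1} ds| ≤ (1/4)·((b^α − a^α)/α)·(M − m). -/
open Set MeasureTheory intervalIntegral

/-!
Substituting `u = t ^ α` turns `∫ s in a..b, f s * s ^ (α - 1)` into `α⁻¹ * ∫ u in A..B, g u`,
where `A = a ^ α`, `B = b ^ α`, `g u = f (u ^ α⁻¹)`, and `g' u = α⁻¹ * D_α f (u ^ α⁻¹)`. So it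
suffices to prove the classical bound `(B - A) * (M - m) / 4` on the trapezoid error of `g` when
`m ≤ g' ≤ M`. Integrating by parts against `u - c`, `c` the midpoint, shows that `B - A` times
this error is `∫ (u - c) * (g' u - γ)`, where the midvalue `γ = (m + M) / 2` may be subtracted
because `∫ (u - c) = 0`; the integrand is at most `(B - A) / 2 * (M - m) / 2` in absolute value.
-/

theorem integral_sub_midpoint_mul_deriv {A B : ℝ} {g g' : ℝ → ℝ} (hAB : A ≤ B)
    (hg : ContinuousOn g (Icc A B)) (hderiv : ∀ u ∈ Ioo A B, HasDerivAt g (g' u) u)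
    (hg' : IntervalIntegrable g' volume A B) :
    ∫ u in A..B, (u - (A + B) / 2) * g' u = (B - A) / 2 * (g A + g B) - ∫ u in A..B, g u := by
  rw [← uIcc_of_le hAB] at hg
  rw [integral_mul_deriv_eq_deriv_mul_of_hasDerivAt (u := fun u => u - (A + B) / 2)
    (u' := fun _ => 1) (by fun_prop) hg
    (fun u _ => (hasDerivAt_id u).sub_const _)
    (by rwa [min_eq_left hAB, max_eq_right hAB]) intervalIntegrable_const hg']
  simp only [one_mul]
  ring

theorem abs_trapezoid_sub_average_le {A B m M : ℝ} {g g' : ℝ → ℝ} (hAB : A < B)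
    (hg : ContinuousOn g (Icc A B)) (hderiv : ∀ u ∈ Ioo A B, HasDerivAt g (g' u) u)
    (hg' : IntervalIntegrable g' volume A B) (hbd : ∀ u ∈ Ioo A B, m ≤ g' u ∧ g' u ≤ M) :
    |(g A + g B) / 2 - (B - A)⁻¹ * ∫ u in A..B, g u| ≤ (B - A) * (M - m) / 4 := by
  set c := (A + B) / 2 with hc
  set γ := (m + M) / 2 with hγ
  have hlen : 0 < B - A := sub_pos.mpr hAB
  have hmoment : ∫ u in A..B, (u - c) * (g' u - γ) =
      (B - A) * ((g A + g B) / 2 - (B - A)⁻¹ * ∫ u in A..B, g u) := by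
    have hlin : IntervalIntegrable (fun u => (u - c) * g' u) volume A B :=
      hg'.continuousOn_mul (by fun_prop : Continuous fun u : ℝ => u - c).continuousOn
    simp only [mul_sub]
    have hconst : IntervalIntegrable (fun u => (u - c) * γ) volume A B :=
      (by fun_prop : Continuous fun u : ℝ => (u - c) * γ).intervalIntegrable A B
    rw [integral_sub hlin hconst, integral_sub_midpoint_mul_deriv hAB.le hg hderiv hg',
      intervalIntegral.integral_mul_const, integral_sub intervalIntegrable_id intervalIntegrable_const,
      integral_id, intervalIntegral.integral_const, smul_eq_mul]
    field_simp
    ring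
  have hbound :
      |∫ u in A..B, (u - c) * (g' u - γ)| ≤ (B - A) / 2 * ((M - m) / 2) * |B - A| := by
    refine (Real.norm_eq_abs _).symm.trans_le (norm_integral_le_of_norm_le_const_ae ?_)
    filter_upwards [volume.ae_ne B] with u huB hu
    rw [uIoc_of_le hAB.le] at hu
    obtain ⟨hm, hM⟩ := hbd u ⟨hu.1, lt_of_le_of_ne hu.2 huB⟩
    rw [Real.norm_eq_abs, abs_mul]
    refine mul_le_mul (abs_le.mpr ⟨?_, ?_⟩) (abs_le.mpr ⟨?_, ?_⟩) (abs_nonneg _) (by linarith)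
    all_goals linarith [hu.1, hu.2]
  rw [hmoment, abs_mul, abs_of_pos hlen] at hbound
  nlinarith

theorem mul_integral_comp_rpow_mul_rpow_sub_one {a b α : ℝ} {F : ℝ → ℝ} (ha : 0 ≤ a)
    (hab : a ≤ b) (hα : 0 < α) (hF : ContinuousOn F (Icc (a ^ α) (b ^ α))) :
    α * ∫ s in a..b, F (s ^ α) * s ^ (α - 1) = ∫ u in a ^ α..b ^ α, F u := by
  have hmaps : MapsTo (· ^ α) (Icc a b) (Icc (a ^ α) (b ^ α)) := fun s hs =>
    ⟨Real.rpow_le_rpow ha hs.1 hα.le, Real.rpow_le_rpow (ha.trans hs.1) hs.2 hα.le⟩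
  have hpow : Continuous (· ^ α : ℝ → ℝ) := Real.continuous_rpow_const hα.le
  have hFpow : ContinuousOn (fun s => F (s ^ α)) (uIcc a b) := by
    rw [uIcc_of_le hab]; exact hF.comp hpow.continuousOn hmaps
  have hderiv : ∀ s ∈ Ioo (min a b) (max a b),
      HasDerivWithinAt (· ^ α) (α * s ^ (α - 1)) (Ioi s) s := by
    rw [min_eq_left hab, max_eq_right hab]
    exact fun s hs => (Real.hasDerivAt_rpow_const (Or.inl (ha.trans_lt hs.1).ne')).hasDerivWithinAt
  have hint : IntegrableOn (fun s => (F ∘ (· ^ α)) s * (α * s ^ (α - 1))) (uIcc a b) := by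
    rw [← intervalIntegrable_iff']
    exact ((intervalIntegrable_rpow' (by linarith)).const_mul α).continuousOn_mul hFpow
  rw [← integral_comp_mul_deriv''' hpow.continuousOn hderiv (hF.mono ?_)
    (hF.integrableOn_Icc.mono_set ?_) hint, ← intervalIntegral.integral_const_mul]
  · simp only [Function.comp_apply]
    ring_nf
  · rw [min_eq_left hab, max_eq_right hab]
    exact (hmaps.mono_left Ioo_subset_Icc_self).image_subset
  · rw [uIcc_of_le hab]
    exact hmaps.image_subset

theorem integral_comp_rpow_inv {a b α : ℝ} {f : ℝ → ℝ} (ha : 0 ≤ a) (hab : a ≤ b) (hα : 0 < α)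
    (hg : ContinuousOn (fun u => f (u ^ α⁻¹)) (Icc (a ^ α) (b ^ α))) :
    ∫ u in a ^ α..b ^ α, f (u ^ α⁻¹) = α * ∫ s in a..b, f s * s ^ (α - 1) := by
  rw [← mul_integral_comp_rpow_mul_rpow_sub_one ha hab hα hg]
  congr 1
  refine integral_congr fun s hs => ?_
  rw [uIcc_of_le hab] at hs
  simp only [Real.rpow_rpow_inv (ha.trans hs.1) hα.ne']

theorem hasDerivAt_comp_rpow_inv {α u : ℝ} {f : ℝ → ℝ} (hα : α ≠ 0) (hu : 0 < u)
    (hf : DifferentiableAt ℝ f (u ^ α⁻¹)) :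
    HasDerivAt (fun v => f (v ^ α⁻¹)) (α⁻¹ * condD α f (u ^ α⁻¹)) u := by
  have hexp : (u ^ α⁻¹) ^ (1 - α) = u ^ (α⁻¹ - 1) := by
    rw [← Real.rpow_mul hu.le, mul_sub, mul_one, inv_mul_cancel₀ hα]
  refine (hf.hasDerivAt.comp u (Real.hasDerivAt_rpow_const (Or.inl hu.ne'))).congr_deriv ?_
  rw [condD, hexp]
  ring

theorem mapsTo_rpow_inv_Icc_rpow {a b α : ℝ} (ha : 0 ≤ a) (hb : 0 ≤ b) (hα : 0 < α) :
    MapsTo (· ^ α⁻¹) (Icc (a ^ α) (b ^ α)) (Icc a b) := fun u hu => by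
  have hu : 0 ≤ u := (Real.rpow_nonneg ha α).trans hu.1
  rwa [mem_Icc, Real.le_rpow_inv_iff_of_pos ha hu hα, Real.rpow_inv_le_iff_of_pos hu hb hα]

/-- Hermite–Hadamard inequality III for conformable derivatives. -/
theorem hermite_hadamard_III (α a b m M : ℝ) (hα : 0 < α ∧ α ≤ 1)
    (ha : 0 ≤ a) (hab : a < b) (f : ℝ → ℝ)
    (hdiff : ∀ x ∈ Icc a b, DifferentiableAt ℝ f x)
    (hcont : ContinuousOn (condD α f) (Icc a b))
    (hbd : ∀ t ∈ Icc a b, m ≤ condD α f t ∧ condD α f t ≤ M) :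
    |(f a + f b) / 2 - (α / (b ^ α - a ^ α)) * ∫ s in a..b, f s * s ^ (α - 1)| ≤
      (1 / 4) * ((b ^ α - a ^ α) / α) * (M - m) := by
  have hα0 := hα.1
  have hAB : a ^ α < b ^ α := Real.rpow_lt_rpow ha hab hα0
  have hroot := mapsTo_rpow_inv_Icc_rpow ha (ha.trans hab.le) hα0
  have hcont_root : Continuous (· ^ α⁻¹ : ℝ → ℝ) := Real.continuous_rpow_const (inv_pos.mpr hα0).le
  have hf : ContinuousOn f (Icc a b) := fun x hx => (hdiff x hx).continuousAt.continuousWithinAt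
  have hg : ContinuousOn (fun u => f (u ^ α⁻¹)) (Icc (a ^ α) (b ^ α)) :=
    hf.comp hcont_root.continuousOn hroot
  have hderiv : ∀ u ∈ Ioo (a ^ α) (b ^ α),
      HasDerivAt (fun v => f (v ^ α⁻¹)) (α⁻¹ * condD α f (u ^ α⁻¹)) u := fun u hu =>
    hasDerivAt_comp_rpow_inv hα0.ne' ((Real.rpow_nonneg ha α).trans_lt hu.1)
      (hdiff _ (hroot (Ioo_subset_Icc_self hu)))
  have hg' : IntervalIntegrable (fun u => α⁻¹ * condD α f (u ^ α⁻¹)) volume (a ^ α) (b ^ α) :=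
    (continuousOn_const.mul (hcont.comp hcont_root.continuousOn hroot)).intervalIntegrable_of_Icc
      hAB.le
  have hbd' : ∀ u ∈ Ioo (a ^ α) (b ^ α),
      α⁻¹ * m ≤ α⁻¹ * condD α f (u ^ α⁻¹) ∧ α⁻¹ * condD α f (u ^ α⁻¹) ≤ α⁻¹ * M := fun u hu =>
    have ⟨hm, hM⟩ := hbd _ (hroot (Ioo_subset_Icc_self hu))
    ⟨by gcongr, by gcongr⟩
  have key := abs_trapezoid_sub_average_le hAB hg hderiv hg' hbd'
  rw [integral_comp_rpow_inv ha hab.le hα0 hg, Real.rpow_rpow_inv ha hα0.ne', Real.rpow_rpow_inv (ha.trans hab.le) hα0.ne'] at key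
  convert key using 2
  · ring
  · field_simp
end
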